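/- Fix α ∈ (0,1) and let p be the zeta distribution p_j = j^{−1/α} / ζ(1/α) for j ∈ ℕ, where ζ(s) = ∑_{j≥1} j^{−s}. Then there exists a constant c > 0 such that for all positive integers n, ∑_{k=n}^{∞} (1/k) E[(1 − p(X))^k] ≥ c / n^{1−α}, where E[(1−p(X))^k] = ∑_j p_j (1−p_j)^k. Consequently, the bias of the harmonic entropy estimator is of exact order n^{−(1−α)} for this distribution, so the upper bound C/n^{1−α} on the bias is tight. -/

import Mathlib

/-!
By exchangeability every draw contributes equally to `E Ĥ`, so condition on the first one: given
`X⁽¹⁾ = j`, its multiplicity among the other `n - 1` draws is `B ~ Bin(n - 1, p_j)`, and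
`E[J(n - 1) - J(B)] = ∑_{k < n-1} (1 - p_j)^(k+1)/(k+1)`. So `E Ĥ` is the entropy with each
Mercator series `-log p_j = ∑_k (1 - p_j)^(k+1)/(k+1)` truncated after `n - 1` terms, and
exchanging the order of summation in the discarded tails (all terms are nonnegative) turns the
bias into `∑_{k ≥ n} E[(1 - p(X))^k] / k`.

For the zeta law, the roughly `(4n)^α` atoms `j ∈ (K, 2K]`, `K = ⌈(4n)^α⌉`, have mass of order
`1/n` but at most `1/(4n)`, so each survives `2n` draws with probability at least `1/2`
(Bernoulli); hence `E[(1 - p(X))^(2n)] ≳ n^(α-1)`, and the `n` terms `k = n, …, 2n - 1` of the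
tail, each at least `E[(1 - p(X))^(2n)] / (2n)`, give `c / n^(1-α)`.
-/

open Filter Asymptotics

/-- `J m` is the `m`-th harmonic number, with `J 0 = 0`. -/
noncomputable def J (m : ℕ) : ℝ := ∑ k ∈ Finset.range m, (1 : ℝ) / (k + 1)

/-- `mcount x i` is the number of occurrences of the symbol `x i` in the sample `x`. -/
def mcount {n : ℕ} (x : Fin n → ℕ+) (i : Fin n) : ℕ :=
  (Finset.univ.filter fun k => x k = x i).card

/-- The harmonic entropy estimator. -/
noncomputable def Hhat {n : ℕ} (x : Fin n → ℕ+) : ℝ :=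
  ((n : ℝ))⁻¹ * ∑ i, (J (n - 1) - J (mcount x i - 1))

/-- The probability that an i.i.d. sample of size `n` from the pmf `p` equals `x`. -/
noncomputable def Pn {n : ℕ} (p : ℕ+ → ℝ) (x : Fin n → ℕ+) : ℝ := ∏ i, p (x i)

/-- The expectation of the harmonic entropy estimator over an i.i.d. sample of size `n`. -/
noncomputable def EHhat (p : ℕ+ → ℝ) (n : ℕ) : ℝ := ∑' x : Fin n → ℕ+, Pn p x * Hhat x

/-- The Shannon entropy of the pmf `p`. -/
noncomputable def Hent (p : ℕ+ → ℝ) : ℝ := -∑' j : ℕ+, p j * Real.log (p j)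

open Finset Real

lemma HasSum.of_prod_fiberwise_of_nonneg {β γ : Type*} {f : β × γ → ℝ} (hf : 0 ≤ f)
    {g : β → ℝ} {s : ℝ} (hfg : ∀ b, HasSum (fun c => f (b, c)) (g b)) (hg : HasSum g s) :
    HasSum f s := by
  have hsum : Summable f := (summable_prod_of_nonneg hf).2
    ⟨fun b => (hfg b).summable, by simpa only [fun b => (hfg b).tsum_eq] using hg.summable⟩
  rw [hg.unique (hsum.hasSum.prod_fiberwise hfg)]
  exact hsum.hasSum

lemma HasSum.of_cons_of_nonneg {α : Type*} {m : ℕ} {f : (Fin (m + 1) → α) → ℝ} (hf : 0 ≤ f)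
    {g : α → ℝ} {s : ℝ} (hfg : ∀ a, HasSum (fun y => f (Fin.cons a y)) (g a)) (hg : HasSum g s) :
    HasSum f s :=
  (Fin.consEquiv fun _ => α).hasSum_iff.1 (.of_prod_fiberwise_of_nonneg (fun _ => hf _) hfg hg)

lemma le_one_of_hasSum_one {ι : Type*} {p : ι → ℝ} (hp0 : ∀ j, 0 ≤ p j) (hp : HasSum p 1) (j : ι) :
    p j ≤ 1 :=
  le_hasSum hp j fun i _ => hp0 i

noncomputable def binomWeight (m : ℕ) (t : ℝ) (b : ℕ) : ℝ :=
  m.choose b * t ^ b * (1 - t) ^ (m - b)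

lemma sum_binomWeight (m : ℕ) (t : ℝ) : ∑ b ∈ range (m + 1), binomWeight m t b = 1 := by
  have h := add_pow t (1 - t) m
  rw [add_sub_cancel, one_pow] at h
  exact (sum_congr rfl fun b _ => by unfold binomWeight; ring).trans h.symm

lemma binomWeight_succ_succ (m b : ℕ) (t : ℝ) :
    binomWeight (m + 1) t (b + 1) = t * binomWeight m t b + (1 - t) * binomWeight m t (b + 1) := by
  unfold binomWeight
  rw [Nat.choose_succ_succ, Nat.cast_add]
  rcases lt_or_ge b m with h | h
  · obtain ⟨k, rfl⟩ := Nat.exists_eq_add_of_lt h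
    rw [show b + k + 1 + 1 - (b + 1) = k + 1 by omega, show b + k + 1 - b = k + 1 by omega,
      show b + k + 1 - (b + 1) = k by omega]
    ring
  · rw [Nat.choose_eq_zero_of_lt (by omega : m < b + 1), show m + 1 - (b + 1) = m - b by omega]
    ring

lemma sum_binomWeight_succ_mul (m : ℕ) (t : ℝ) (g : ℕ → ℝ) :
    ∑ b ∈ range (m + 2), binomWeight (m + 1) t b * g b
      = (1 - t) * ∑ b ∈ range (m + 1), binomWeight m t b * g b
        + t * ∑ b ∈ range (m + 1), binomWeight m t b * g (b + 1) := by
  have hzero : binomWeight (m + 1) t 0 = (1 - t) * binomWeight m t 0 := by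
    simp [binomWeight, pow_succ']
  have hlast : binomWeight m t (m + 1) = 0 := by simp [binomWeight]
  rw [sum_range_succ' (fun b => binomWeight (m + 1) t b * g b) (m + 1),
    sum_range_succ' (fun b => binomWeight m t b * g b) m]
  simp only [binomWeight_succ_succ, add_mul, sum_add_distrib, mul_assoc, ← mul_sum, hzero]
  rw [sum_range_succ (fun b => binomWeight m t (b + 1) * g (b + 1)) m, hlast]
  ring

lemma sum_binomWeight_mul_div_succ (m : ℕ) (t : ℝ) :
    ∑ b ∈ range (m + 1), binomWeight m t b * (t / (b + 1))
      = (1 - (1 - t) ^ (m + 1)) / (m + 1) := by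
  have hshift : ∀ b ∈ range (m + 1),
      binomWeight m t b * (t / (b + 1)) = binomWeight (m + 1) t (b + 1) / (m + 1) := by
    intro b hb
    have hchoose : ((m + 1 : ℕ) : ℝ) * m.choose b = (m + 1).choose (b + 1) * ((b + 1 : ℕ) : ℝ) := by
      exact_mod_cast Nat.add_one_mul_choose_eq m b
    push_cast at hchoose
    rw [binomWeight, binomWeight, show m + 1 - (b + 1) = m - b by omega]
    field_simp
    linear_combination t ^ (b + 1) * (1 - t) ^ (m - b) * hchoose
  rw [sum_congr rfl hshift, ← sum_div]
  have htotal := sum_binomWeight (m + 1) t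
  rw [sum_range_succ', show binomWeight (m + 1) t 0 = (1 - t) ^ (m + 1) by simp [binomWeight]]
    at htotal
  rw [eq_sub_of_add_eq htotal]

lemma J_succ (m : ℕ) : J (m + 1) = J m + 1 / (m + 1) := sum_range_succ _ m

lemma J_mono : Monotone J := fun _ _ hab =>
  sum_le_sum_of_subset_of_nonneg (range_subset_range.2 hab) fun _ _ _ => by positivity

noncomputable def negLogPartialSum (m : ℕ) (t : ℝ) : ℝ :=
  ∑ k ∈ range m, (1 - t) ^ (k + 1) / (k + 1)

lemma negLogPartialSum_nonneg {t : ℝ} (ht1 : t ≤ 1) (m : ℕ) : 0 ≤ negLogPartialSum m t :=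
  sum_nonneg fun k _ => div_nonneg (pow_nonneg (by linarith) _) (by positivity)

lemma negLogPartialSum_le_J {t : ℝ} (ht0 : 0 ≤ t) (ht1 : t ≤ 1) (m : ℕ) :
    negLogPartialSum m t ≤ J m :=
  sum_le_sum fun k _ =>
    div_le_div_of_nonneg_right (pow_le_one₀ (by linarith) (by linarith)) (by positivity)

lemma sum_binomWeight_mul_J_sub (m : ℕ) (t : ℝ) :
    ∑ b ∈ range (m + 1), binomWeight m t b * (J m - J b) = negLogPartialSum m t := by
  induction m with
  | zero => simp [negLogPartialSum]
  | succ m ih =>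
    have hJ : ∀ b, J (m + 1) - J b = (J m - J b) + 1 / (m + 1) := fun b => by
      rw [J_succ]; ring
    have hJ' : ∀ b, J (m + 1) - J (b + 1) = (J m - J b) + 1 / (m + 1) - 1 / (b + 1) := fun b => by
      rw [J_succ, J_succ]; ring
    have hrec : t * ∑ b ∈ range (m + 1), binomWeight m t b * (1 / (b + 1))
        = (1 - (1 - t) ^ (m + 1)) / (m + 1) := by
      rw [← sum_binomWeight_mul_div_succ, mul_sum]
      exact sum_congr rfl fun b _ => by ring
    have hstep : negLogPartialSum (m + 1) t = negLogPartialSum m t + (1 - t) ^ (m + 1) / (m + 1) :=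
      sum_range_succ _ m
    rw [sum_binomWeight_succ_mul, hstep, ← ih]
    simp only [hJ']
    simp only [hJ, mul_add, mul_sub, sum_add_distrib, sum_sub_distrib, ← sum_mul,
      sum_binomWeight]
    linear_combination -hrec

lemma hasSum_neg_log_sub_negLogPartialSum {t : ℝ} (ht0 : 0 < t) (ht1 : t ≤ 1) (m : ℕ) :
    HasSum (fun i : ℕ => 1 / (((m + 1 : ℕ) : ℝ) + i) * (1 - t) ^ (m + 1 + i))
      (-log t - negLogPartialSum m t) := by
  have hmercator :=
    hasSum_pow_div_log_of_abs_lt_one (x := 1 - t) (abs_lt.2 ⟨by linarith, by linarith⟩)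
  rw [sub_sub_cancel, ← hasSum_nat_add_iff' m] at hmercator
  refine hmercator.congr_fun fun i => ?_
  rw [show m + 1 + i = i + m + 1 by ring]
  push_cast
  ring

lemma hasSum_mul_neg_log_sub_negLogPartialSum {t : ℝ} (ht0 : 0 ≤ t) (ht1 : t ≤ 1) (m : ℕ) :
    HasSum (fun i : ℕ => 1 / (((m + 1 : ℕ) : ℝ) + i) * (t * (1 - t) ^ (m + 1 + i)))
      (t * -log t - t * negLogPartialSum m t) := by
  rcases ht0.eq_or_lt with rfl | ht0
  · simp
  · rw [← mul_sub]
    exact ((hasSum_neg_log_sub_negLogPartialSum ht0 ht1 m).mul_left t).congr_fun fun i => by ring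

def sampleCount {m : ℕ} (y : Fin m → ℕ+) (j : ℕ+) : ℕ := #{k | y k = j}

lemma sampleCount_cons {m : ℕ} (a : ℕ+) (y : Fin m → ℕ+) (j : ℕ+) :
    sampleCount (Fin.cons a y) j = sampleCount y j + if a = j then 1 else 0 := by
  simp only [sampleCount, card_filter, Fin.sum_univ_succ, Fin.cons_zero, Fin.cons_succ, add_comm]

lemma sampleCount_le {m : ℕ} (y : Fin m → ℕ+) (j : ℕ+) : sampleCount y j ≤ m :=
  (card_filter_le _ _).trans_eq (card_fin m)

lemma mcount_cons_zero {m : ℕ} (a : ℕ+) (y : Fin m → ℕ+) :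
    mcount (Fin.cons a y) 0 = sampleCount y a + 1 := by
  rw [show mcount (Fin.cons a y) 0 = sampleCount (Fin.cons a y) a from rfl, sampleCount_cons,
    if_pos rfl]

lemma mcount_comp_perm {n : ℕ} (σ : Equiv.Perm (Fin n)) (x : Fin n → ℕ+) (i : Fin n) :
    mcount (x ∘ σ) i = mcount x (σ i) :=
  card_bij (fun k _ => σ k) (by simp) (fun _ _ _ _ h => σ.injective h)
    fun k hk => ⟨σ.symm k, by simpa using hk, by simp⟩

noncomputable def expectedMissingMass (p : ℕ+ → ℝ) (k : ℕ) : ℝ := ∑' j, p j * (1 - p j) ^ k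

section Sample

variable {p : ℕ+ → ℝ}

lemma Pn_cons {m : ℕ} (a : ℕ+) (y : Fin m → ℕ+) :
    Pn p (Fin.cons a y) = p a * Pn p y :=
  Fin.prod_univ_succ _

lemma Pn_comp_perm {n : ℕ} (σ : Equiv.Perm (Fin n)) (x : Fin n → ℕ+) :
    Pn p (x ∘ σ) = Pn p x :=
  Equiv.prod_comp σ fun k => p (x k)

lemma Pn_nonneg {n : ℕ} (hp0 : ∀ j, 0 ≤ p j) (x : Fin n → ℕ+) : 0 ≤ Pn p x :=
  prod_nonneg fun k _ => hp0 (x k)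

lemma hasSum_Pn_mul_sampleCount (hp0 : ∀ j, 0 ≤ p j) (hp : HasSum p 1) (m : ℕ)
    (g : ℕ → ℝ) (hg : ∀ b ≤ m, 0 ≤ g b) (j : ℕ+) :
    HasSum (fun y : Fin m → ℕ+ => Pn p y * g (sampleCount y j))
      (∑ b ∈ range (m + 1), binomWeight m (p j) b * g b) := by
  induction m generalizing g with
  | zero => simp [Pn, sampleCount, binomWeight]
  | succ m ih =>
    set S₀ := ∑ b ∈ range (m + 1), binomWeight m (p j) b * g b
    set S₁ := ∑ b ∈ range (m + 1), binomWeight m (p j) b * g (b + 1)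
    refine .of_cons_of_nonneg (g := fun a => p a * if a = j then S₁ else S₀)
      (fun y => mul_nonneg (Pn_nonneg hp0 y) (hg _ (sampleCount_le y j))) (fun a => ?_) ?_
    · by_cases ha : a = j
      · subst ha
        simpa [Pn_cons, sampleCount_cons, mul_assoc] using
          (ih (fun b => g (b + 1)) fun b hb => hg _ (by omega)).mul_left (p a)
      · simpa [Pn_cons, sampleCount_cons, ha, mul_assoc] using
          (ih g fun b hb => hg _ (by omega)).mul_left (p a)
    · have hval : (1 - p j) * S₀ + p j * S₁ = 1 * S₀ + p j * (S₁ - S₀) := by ring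
      rw [sum_binomWeight_succ_mul, hval]
      refine ((hp.mul_right S₀).add (hasSum_ite_eq j (p j * (S₁ - S₀)))).congr_fun fun a => ?_
      split_ifs with ha
      · subst ha
        ring
      · simp

lemma summable_mul_negLogPartialSum (hp0 : ∀ j, 0 ≤ p j) (hp : HasSum p 1) (m : ℕ) :
    Summable fun a => p a * negLogPartialSum m (p a) := by
  have hp1 := le_one_of_hasSum_one hp0 hp
  refine .of_nonneg_of_le (fun a => ?_) (fun a => ?_) (hp.summable.mul_right (J m))
  · exact mul_nonneg (hp0 a) (negLogPartialSum_nonneg (hp1 a) m)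
  · exact mul_le_mul_of_nonneg_left (negLogPartialSum_le_J (hp0 a) (hp1 a) m) (hp0 a)

lemma hasSum_Pn_mul_J_sub_mcount_zero (hp0 : ∀ j, 0 ≤ p j) (hp : HasSum p 1) (m : ℕ) :
    HasSum (fun x : Fin (m + 1) → ℕ+ => Pn p x * (J m - J (mcount x 0 - 1)))
      (∑' a, p a * negLogPartialSum m (p a)) := by
  refine .of_cons_of_nonneg (g := fun a => p a * negLogPartialSum m (p a))
    (fun x => mul_nonneg (Pn_nonneg hp0 x) ?_) (fun a => ?_) ?_
  · have : mcount x 0 ≤ m + 1 := sampleCount_le x (x 0)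
    exact sub_nonneg.2 (J_mono (by omega))
  · simpa [Pn_cons, mcount_cons_zero, mul_assoc, sum_binomWeight_mul_J_sub] using
      (hasSum_Pn_mul_sampleCount hp0 hp m (fun b => J m - J b)
        (fun b hb => sub_nonneg.2 (J_mono hb)) a).mul_left (p a)
  · exact (summable_mul_negLogPartialSum hp0 hp m).hasSum

lemma hasSum_Pn_mul_mcount_iff {n : ℕ} (h : ℕ → ℝ) (i j : Fin n) {s : ℝ} :
    HasSum (fun x => Pn p x * h (mcount x i)) s ↔ HasSum (fun x => Pn p x * h (mcount x j)) s := by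
  rw [← ((Equiv.swap i j).arrowCongr (Equiv.refl ℕ+)).hasSum_iff]
  congr! with x
  show Pn p (x ∘ (Equiv.swap i j).symm) * h (mcount (x ∘ (Equiv.swap i j).symm) i) = _
  rw [Pn_comp_perm, mcount_comp_perm, Equiv.symm_swap, Equiv.swap_apply_left]

lemma EHhat_succ (hp0 : ∀ j, 0 ≤ p j) (hp : HasSum p 1) (m : ℕ) :
    EHhat p (m + 1) = ∑' a, p a * negLogPartialSum m (p a) := by
  have hcoord : ∀ i ∈ (univ : Finset (Fin (m + 1))),
      HasSum (fun x => Pn p x * (J m - J (mcount x i - 1)))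
        (∑' a, p a * negLogPartialSum m (p a)) :=
    fun i _ => (hasSum_Pn_mul_mcount_iff (fun b => J m - J (b - 1)) i 0).2
      (hasSum_Pn_mul_J_sub_mcount_zero hp0 hp m)
  have hsum := (hasSum_sum hcoord).mul_left ((m + 1 : ℝ)⁻¹)
  rw [sum_const, card_univ, Fintype.card_fin, nsmul_eq_mul, Nat.cast_add_one,
    inv_mul_cancel_left₀ (by positivity)] at hsum
  refine (hsum.congr_fun fun x => ?_).tsum_eq
  rw [Hhat, Nat.add_sub_cancel, Nat.cast_add_one, mul_sum, mul_sum, mul_sum]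
  exact sum_congr rfl fun i _ => by ring

theorem hasSum_Hent_sub_EHhat (hp0 : ∀ j, 0 ≤ p j) (hp : HasSum p 1)
    (hent : Summable fun j => p j * log (p j)) {n : ℕ} (hn : n ≠ 0) :
    HasSum (fun i : ℕ => 1 / (n + i : ℝ) * expectedMissingMass p (n + i)) (Hent p - EHhat p n) := by
  obtain ⟨m, rfl⟩ := Nat.exists_eq_succ_of_ne_zero hn
  have hp1 := le_one_of_hasSum_one hp0 hp
  set F : ℕ+ × ℕ → ℝ :=
    fun z => 1 / (((m + 1 : ℕ) : ℝ) + z.2) * (p z.1 * (1 - p z.1) ^ (m + 1 + z.2))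
  have hF0 : 0 ≤ F := fun z =>
    mul_nonneg (by positivity) (mul_nonneg (hp0 _) (pow_nonneg (sub_nonneg.2 (hp1 _)) _))
  have htotal : HasSum (fun a => p a * -log (p a) - p a * negLogPartialSum m (p a))
      (Hent p - EHhat p (m + 1)) := by
    rw [EHhat_succ hp0 hp, Hent, ← tsum_neg]
    exact (hent.neg.hasSum.sub (summable_mul_negLogPartialSum hp0 hp m).hasSum).congr_fun
      fun a => by ring
  have hF := HasSum.of_prod_fiberwise_of_nonneg hF0
    (fun a => hasSum_mul_neg_log_sub_negLogPartialSum (hp0 a) (hp1 a) m) htotal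
  have hswap := (Equiv.prodComm ℕ ℕ+).hasSum_iff.2 hF
  refine (hswap.prod_fiberwise fun i => (hswap.summable.prod_factor i).hasSum).congr_fun
    fun i => ?_
  exact tsum_mul_left.symm

lemma summable_mul_one_sub_pow (hp0 : ∀ j, 0 ≤ p j) (hp : HasSum p 1) (k : ℕ) :
    Summable fun j => p j * (1 - p j) ^ k := by
  have hp1 := le_one_of_hasSum_one hp0 hp
  refine .of_nonneg_of_le (fun j => ?_) (fun j => ?_) hp.summable
  · exact mul_nonneg (hp0 j) (pow_nonneg (sub_nonneg.2 (hp1 j)) k)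
  · exact mul_le_of_le_one_right (hp0 j) (pow_le_one₀ (sub_nonneg.2 (hp1 j)) (by linarith [hp0 j]))

lemma expectedMissingMass_nonneg (hp0 : ∀ j, 0 ≤ p j) (hp1 : ∀ j, p j ≤ 1) (k : ℕ) :
    0 ≤ expectedMissingMass p k :=
  tsum_nonneg fun j => mul_nonneg (hp0 j) (pow_nonneg (sub_nonneg.2 (hp1 j)) k)

lemma expectedMissingMass_antitone (hp0 : ∀ j, 0 ≤ p j) (hp : HasSum p 1) :
    Antitone (expectedMissingMass p) := fun k l hkl => by
  have hp1 := le_one_of_hasSum_one hp0 hp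
  refine Summable.tsum_le_tsum (fun j => ?_) (summable_mul_one_sub_pow hp0 hp l)
    (summable_mul_one_sub_pow hp0 hp k)
  exact mul_le_mul_of_nonneg_left
    (pow_le_pow_of_le_one (sub_nonneg.2 (hp1 j)) (by linarith [hp0 j]) hkl) (hp0 j)

lemma expectedMissingMass_two_mul_div_two_le (hp0 : ∀ j, 0 ≤ p j) (hp : HasSum p 1)
    {n : ℕ} (hn : n ≠ 0) {B : ℝ}
    (hB : HasSum (fun i : ℕ => 1 / (n + i : ℝ) * expectedMissingMass p (n + i)) B) :
    expectedMissingMass p (2 * n) / 2 ≤ B := by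
  have hE0 := expectedMissingMass_nonneg hp0 (le_one_of_hasSum_one hp0 hp)
  calc expectedMissingMass p (2 * n) / 2
      = ∑ i ∈ range n, 1 / (2 * n : ℝ) * expectedMissingMass p (2 * n) := by
        rw [sum_const, card_range, nsmul_eq_mul]
        field_simp
    _ ≤ ∑ i ∈ range n, 1 / (n + i : ℝ) * expectedMissingMass p (n + i) := by
        refine sum_le_sum fun i hi => mul_le_mul ?_ ?_ (hE0 _) (by positivity)
        · have : (i : ℝ) ≤ n := by exact_mod_cast (mem_range.1 hi).le
          exact one_div_le_one_div_of_le (by positivity) (by linarith)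
        · exact expectedMissingMass_antitone hp0 hp (by linarith [mem_range.1 hi])
    _ ≤ B := sum_le_hasSum _ (fun i _ => mul_nonneg (by positivity) (hE0 _)) hB

lemma card_mul_div_two_le_expectedMissingMass (hp0 : ∀ j, 0 ≤ p j) (hp : HasSum p 1)
    (k : ℕ) (w : Finset ℕ+) {τ : ℝ} (hτ : ∀ j ∈ w, τ ≤ p j)
    (hsmall : ∀ j ∈ w, 2 * k * p j ≤ 1) :
    #w * τ / 2 ≤ expectedMissingMass p k := by
  have hp1 := le_one_of_hasSum_one hp0 hp
  calc #w * τ / 2 = ∑ j ∈ w, τ * (1 / 2) := by rw [sum_const, nsmul_eq_mul]; ring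
    _ ≤ ∑ j ∈ w, p j * (1 - p j) ^ k := by
        refine sum_le_sum fun j hj => mul_le_mul (hτ j hj) ?_ (by norm_num) (hp0 j)
        have hbernoulli := one_add_mul_le_pow (a := -p j) (by linarith [hp1 j]) k
        rw [← sub_eq_add_neg, mul_neg] at hbernoulli
        linarith [hsmall j hj]
    _ ≤ expectedMissingMass p k :=
        (summable_mul_one_sub_pow hp0 hp k).sum_le_tsum w fun j _ =>
          mul_nonneg (hp0 j) (pow_nonneg (sub_nonneg.2 (hp1 j)) k)

end Sample

lemma exists_pnat_finset_card_ge_mem_Icc {x : ℝ} (hx : 1 ≤ x) :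
    ∃ w : Finset ℕ+, x ≤ #w ∧ ∀ j ∈ w, (j : ℝ) ∈ Set.Icc x (4 * x) := by
  set K : ℕ+ := ⟨⌈x⌉₊, Nat.ceil_pos.2 (by linarith)⟩
  have hxK : x ≤ K := Nat.le_ceil x
  have hKx : (K : ℝ) < x + 1 := Nat.ceil_lt_add_one (by linarith)
  refine ⟨Ioc K (2 * K), ?_, fun j hj => ?_⟩
  · have hcard : #(Ioc K (2 * K)) = (K : ℕ) := by
      simp only [PNat.card_Ioc, PNat.mul_coe, PNat.val_ofNat]
      omega
    rwa [hcard]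
  · rw [mem_Ioc] at hj
    have hlo : (K : ℝ) < j := by exact_mod_cast hj.1
    have hhi : (j : ℝ) ≤ 2 * K := by exact_mod_cast hj.2
    constructor <;> linarith

noncomputable def zetaPMF (s : ℝ) (j : ℕ+) : ℝ := (j : ℝ) ^ (-s) / ∑' i : ℕ+, (i : ℝ) ^ (-s)

section zetaPMF

variable {s : ℝ}

lemma summable_pnat_rpow_neg (hs : 1 < s) : Summable fun j : ℕ+ => (j : ℝ) ^ (-s) :=
  (Real.summable_nat_rpow.2 (by linarith)).comp_injective PNat.coe_injective

lemma one_le_tsum_pnat_rpow_neg (hs : 1 < s) : 1 ≤ ∑' j : ℕ+, (j : ℝ) ^ (-s) := by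
  simpa using (summable_pnat_rpow_neg hs).le_tsum 1 fun j _ => by positivity

lemma zetaPMF_nonneg (s : ℝ) (j : ℕ+) : 0 ≤ zetaPMF s j :=
  div_nonneg (by positivity) (tsum_nonneg fun i => by positivity)

lemma zetaPMF_le_rpow_neg (hs : 1 < s) (j : ℕ+) : zetaPMF s j ≤ (j : ℝ) ^ (-s) :=
  div_le_self (by positivity) (one_le_tsum_pnat_rpow_neg hs)

lemma hasSum_zetaPMF (hs : 1 < s) : HasSum (zetaPMF s) 1 := by
  have h := (summable_pnat_rpow_neg hs).hasSum.div_const (∑' i : ℕ+, (i : ℝ) ^ (-s))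
  rwa [div_self (by linarith [one_le_tsum_pnat_rpow_neg hs])] at h

lemma summable_pnat_rpow_neg_mul_log (hs : 1 < s) :
    Summable fun j : ℕ+ => (j : ℝ) ^ (-s) * log j := by
  set ε := (s - 1) / 2 with hε_def
  have hε : 0 < ε := by linarith
  refine .of_nonneg_of_le
    (fun j => mul_nonneg (by positivity) (log_nonneg (Nat.one_le_cast.2 j.pos))) (fun j => ?_) ((summable_pnat_rpow_neg (s := s - ε) (by linarith)).mul_left ε⁻¹)
  have hj : (0 : ℝ) < j := by positivity
  calc (j : ℝ) ^ (-s) * log j ≤ (j : ℝ) ^ (-s) * ((j : ℝ) ^ ε / ε) :=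
        mul_le_mul_of_nonneg_left (log_le_rpow_div hj.le hε) (by positivity)
    _ = ε⁻¹ * (j : ℝ) ^ (-(s - ε)) := by
        rw [show -(s - ε) = -s + ε by ring, rpow_add hj]
        ring

lemma summable_zetaPMF_mul_log (hs : 1 < s) :
    Summable fun j => zetaPMF s j * log (zetaPMF s j) := by
  set S := ∑' i : ℕ+, (i : ℝ) ^ (-s)
  have hS : 0 < S := by linarith [one_le_tsum_pnat_rpow_neg hs]
  refine (((summable_pnat_rpow_neg_mul_log hs).mul_left (-s / S)).add
    ((summable_pnat_rpow_neg hs).mul_left (-log S / S))).congr fun j => ?_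
  have hj : (0 : ℝ) < j := by positivity
  rw [zetaPMF, log_div (by positivity) hS.ne', log_rpow hj]
  ring

lemma zetaPMF_le_rpow_neg_of_le (hs : 1 < s) {x : ℝ} (hx : 0 < x) {j : ℕ+} (hxj : x ≤ j) :
    zetaPMF s j ≤ x ^ (-s) :=
  (zetaPMF_le_rpow_neg hs j).trans (rpow_le_rpow_of_nonpos hx hxj (by linarith))

lemma rpow_neg_div_le_zetaPMF (hs : 0 ≤ s) {y : ℝ} {j : ℕ+} (hjy : (j : ℝ) ≤ y) :
    y ^ (-s) / ∑' i : ℕ+, (i : ℝ) ^ (-s) ≤ zetaPMF s j :=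
  div_le_div_of_nonneg_right (rpow_le_rpow_of_nonpos (by positivity) hjy (by linarith))
    (tsum_nonneg fun i => by positivity)

lemma le_expectedMissingMass_zetaPMF_two_mul (hs : 1 < s) {n : ℕ} (hn : n ≠ 0) :
    (4 : ℝ) ^ (-s) / (8 * ∑' i : ℕ+, (i : ℝ) ^ (-s)) * n ^ s⁻¹ / n
      ≤ expectedMissingMass (zetaPMF s) (2 * n) := by
  set S := ∑' i : ℕ+, (i : ℝ) ^ (-s)
  have hS : 0 < S := by linarith [one_le_tsum_pnat_rpow_neg hs]
  have hn1 : (1 : ℝ) ≤ n := Nat.one_le_cast.2 (Nat.pos_of_ne_zero hn)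
  set x : ℝ := (4 * n) ^ s⁻¹
  have hx1 : 1 ≤ x := one_le_rpow (by linarith) (by positivity)
  have hxs : x ^ (-s) = (4 * (n : ℝ))⁻¹ := by
    rw [← rpow_mul (by positivity), inv_mul_eq_div, neg_div, div_self (by positivity),
      rpow_neg_one]
  have hτ : (4 * x) ^ (-s) / S = (4 : ℝ) ^ (-s) / (4 * n * S) := by
    rw [mul_rpow (by norm_num) (by positivity), hxs]
    field_simp
  obtain ⟨w, hxw, hw⟩ := exists_pnat_finset_card_ge_mem_Icc hx1
  have hbound := card_mul_div_two_le_expectedMissingMass (fun j => zetaPMF_nonneg s j)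
    (hasSum_zetaPMF hs) (2 * n) w (fun j hj => rpow_neg_div_le_zetaPMF (by linarith) (hw j hj).2)
    fun j hj => ?_
  · rw [hτ] at hbound
    have hnx : (n : ℝ) ^ s⁻¹ ≤ #w :=
      (rpow_le_rpow (by positivity) (by linarith) (by positivity)).trans hxw
    calc (4 : ℝ) ^ (-s) / (8 * S) * n ^ s⁻¹ / n
        = n ^ s⁻¹ * ((4 : ℝ) ^ (-s) / (4 * n * S)) / 2 := by
          field_simp
          ring
      _ ≤ #w * ((4 : ℝ) ^ (-s) / (4 * n * S)) / 2 := by gcongr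
      _ ≤ _ := hbound
  · have hpj := zetaPMF_le_rpow_neg_of_le hs (by linarith) (hw j hj).1
    rw [hxs] at hpj
    calc 2 * ((2 * n : ℕ) : ℝ) * zetaPMF s j ≤ 4 * n * (4 * (n : ℝ))⁻¹ := by
          push_cast
          nlinarith [zetaPMF_nonneg s j]
      _ = 1 := mul_inv_cancel₀ (by positivity)

end zetaPMF

/-- tightness of the bias bound for the zeta distribution.
Fix `α ∈ (0,1)` and let `p_j = j^{−1/α} / ζ(1/α)`. Then there is `c > 0` such that for all
`n ≥ 1` the tail sum `∑_{k=n}^∞ (1/k) E[(1−p(X))^k]` is at least `c / n^{1−α}`; since the bias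
equals minus this sum, the bias of the harmonic entropy estimator is of exact order
`n^{−(1−α)}`, so the upper bound `C/n^{1−α}` is tight. -/
theorem zeta_distribution_bias_tight (α : ℝ) (hα : α ∈ Set.Ioo (0 : ℝ) 1)
    (p : ℕ+ → ℝ)
    (hp : ∀ j : ℕ+, p j = (j : ℝ) ^ (-(1 / α)) / ∑' i : ℕ+, (i : ℝ) ^ (-(1 / α))) :
    ∃ c > 0, ∀ n : ℕ, 1 ≤ n →
      c / (n : ℝ) ^ (1 - α)
          ≤ (∑' i : ℕ, (1 / (n + i : ℝ)) * ∑' j : ℕ+, p j * (1 - p j) ^ (n + i)) ∧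
      c / (n : ℝ) ^ (1 - α) ≤ |EHhat p n - Hent p| := by
  obtain ⟨hα0, hα1⟩ := hα
  have hs : 1 < 1 / α := one_lt_one_div hα0 hα1
  obtain rfl : p = zetaPMF (1 / α) := funext hp
  have hS : 0 < ∑' i : ℕ+, (i : ℝ) ^ (-(1 / α)) := by linarith [one_le_tsum_pnat_rpow_neg hs]
  refine ⟨(4 : ℝ) ^ (-(1 / α)) / (16 * ∑' i : ℕ+, (i : ℝ) ^ (-(1 / α))), by positivity,
    fun n hn => ?_⟩
  have hn0 : n ≠ 0 := Nat.one_le_iff_ne_zero.1 hn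
  have hbias := hasSum_Hent_sub_EHhat (zetaPMF_nonneg _) (hasSum_zetaPMF hs)
    (summable_zetaPMF_mul_log hs) hn0
  have hlower : (4 : ℝ) ^ (-(1 / α)) / (16 * ∑' i : ℕ+, (i : ℝ) ^ (-(1 / α))) / n ^ (1 - α)
      ≤ Hent (zetaPMF (1 / α)) - EHhat (zetaPMF (1 / α)) n := by
    have hwindow := le_expectedMissingMass_zetaPMF_two_mul hs hn0
    rw [inv_div, div_one] at hwindow
    refine le_trans (le_of_eq ?_) ((div_le_div_of_nonneg_right hwindow zero_le_two).trans
      (expectedMissingMass_two_mul_div_two_le (zetaPMF_nonneg _) (hasSum_zetaPMF hs) hn0 hbias))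
    rw [rpow_sub (by positivity), rpow_one]
    field_simp
    ring
  refine ⟨hlower.trans_eq hbias.tsum_eq.symm, ?_⟩
  rw [abs_sub_comm, abs_of_nonneg ((by positivity : (0 : ℝ) ≤ _).trans hlower)]
  exact hlower
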